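/- arXiv:1808.00383 — 8 statements merged into one kernel-verified Lean document; each statement's English description precedes it below -/
import Mathlib

section
/- For any proposition A, the disjunction A ∨ ¬A holds if and only if there exists a unique y : ℕ such that y ≤ 1 and (y = 0 ↔ A). (This equivalence is provable without classical axioms.) -/
/-- The law of the excluded middle for `A` is equivalent to the unique
existence of a characteristic value for `A` (Lemma 2.6 of the paper). -/
theorem em_iff_unique_characteristic_value (A : Prop) :
    (A ∨ ¬ A) ↔ ∃! y : ℕ, y ≤ 1 ∧ (y = 0 ↔ A) := by
  constructor
  · rintro (h | h)
    · exact ⟨0, ⟨Nat.zero_le 1, by simp [h]⟩, by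
        rintro y ⟨_, hy⟩
        by_contra hne
        exact hne (hy.mpr h)⟩
    · refine ⟨1, ⟨le_refl 1, by simp; intro h1; exact absurd ((by simp [h1]) : A) h⟩, ?_⟩
      rintro y ⟨hy1, hy⟩
      interval_cases y
      · exact absurd (hy.mp rfl) h
      · rfl
  · rintro ⟨y, ⟨hy1, hy⟩, -⟩
    interval_cases y
    · exact Or.inl (hy.mp rfl)
    · exact Or.inr fun a => by simpa using hy.mpr a
end

section
/- Let S be a set of functions ℕ → ℕ. If S satisfies AC₀₀!, then S satisfies QF-AC₀₀. (Proof: given β ∈ S with ∀ x ∃ y, β (Nat.pair x y) = 0, the relation A x y := β (Nat.pair x y) = 0 ∧ ∀ z < y, β (Nat.pair x z) ≠ 0 has a unique witness for each x.) -/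
/-- `S` satisfies AC₀₀!: every relation on ℕ with a unique witness for each
argument has a choice function in `S`. -/
def SatAC00Unique (S : Set (ℕ → ℕ)) : Prop :=
  ∀ A : ℕ → ℕ → Prop, (∀ x, ∃! y, A x y) → ∃ α ∈ S, ∀ x, A x (α x)

/-- `S` satisfies QF-AC₀₀ (quantifier-free countable choice, relativized). -/
def SatQFAC00 (S : Set (ℕ → ℕ)) : Prop :=
  ∀ β ∈ S, (∀ x, ∃ y, β (Nat.pair x y) = 0) →
    ∃ α ∈ S, ∀ x, β (Nat.pair x (α x)) = 0

/-- Semantic form of Proposition 2.7: AC₀₀! entails QF-AC₀₀. -/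
theorem ac00Unique_implies_qfac00 (S : Set (ℕ → ℕ))
    (hAC : SatAC00Unique S) : SatQFAC00 S := by
  intro β hβ hex
  obtain ⟨α, hα, hA⟩ := hAC
    (fun x y => β (Nat.pair x y) = 0 ∧ ∀ z < y, β (Nat.pair x z) ≠ 0)
    (fun x => by
      refine ⟨Nat.find (hex x), ⟨Nat.find_spec (hex x),
        fun z hz => Nat.find_min (hex x) hz⟩, ?_⟩
      rintro w ⟨hw, hwmin⟩
      rcases lt_trichotomy w (Nat.find (hex x)) with h | h | h
      · exact absurd hw (Nat.find_min (hex x) h)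
      · exact h
      · exact absurd (Nat.find_spec (hex x)) (hwmin _ h))
  exact ⟨α, hα, fun x => (hA x).1⟩
end

section
/- Let S be a set of functions ℕ → ℕ. If S satisfies AC₀₀!, then S satisfies CF_d. (Proof: for a predicate B with ∀ x, B x ∨ ¬B x, the relation A x y := y ≤ 1 ∧ (y = 0 ↔ B x) has a unique witness for each x.) -/
/-- `S` satisfies CF_d: every decidable predicate of natural numbers has a
characteristic function in `S`. -/
def SatCFd (S : Set (ℕ → ℕ)) : Prop :=
  ∀ B : ℕ → Prop, (∀ x, B x ∨ ¬ B x) →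
    ∃ β ∈ S, ∀ x, β x ≤ 1 ∧ (β x = 0 ↔ B x)

/-- Semantic form of Proposition 3.1: AC₀₀! entails CF_d. -/
theorem ac00Unique_implies_cfd (S : Set (ℕ → ℕ))
    (hAC : SatAC00Unique S) : SatCFd S := by
  intro B hB
  have h := hAC (fun x y => y ≤ 1 ∧ (y = 0 ↔ B x)) ?_
  · obtain ⟨α, hS, hα⟩ := h
    exact ⟨α, hS, hα⟩
  · intro x
    rcases hB x with hb | hb
    · exact ⟨0, ⟨by norm_num, by simp [hb]⟩, fun y hy => hy.2.2 hb⟩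
    · refine ⟨1, ⟨le_refl 1, by simp [hb]⟩, fun y hy => ?_⟩
      have h1 := hy.1
      interval_cases y
      · exact absurd (hy.2.1 rfl) hb
      · rfl
end

section
/- Let S be a set of functions ℕ → ℕ. If S satisfies QF-AC₀₀ and S satisfies CF_d, then S satisfies AC₀₀!. (Proof: given A : ℕ → ℕ → Prop with a unique witness for every x, the predicate w ↦ A ((Nat.unpair w).1) ((Nat.unpair w).2) is decidable by uniqueness; CF_d yields a characteristic function β ∈ S; applying QF-AC₀₀ to β yields the choice function.) -/
/-- Semantic form of Theorem 3.2: QF-AC₀₀ + CF_d entails AC₀₀!. -/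
theorem qfac00_and_cfd_implies_ac00Unique (S : Set (ℕ → ℕ))
    (hQF : SatQFAC00 S) (hCF : SatCFd S) : SatAC00Unique S := by
  intro A hA
  obtain ⟨β, hβS, hβ⟩ := hCF (fun w => A (Nat.unpair w).1 (Nat.unpair w).2)
    (fun w => em _)
  obtain ⟨α, hαS, hα⟩ := hQF β hβS (fun x => by
    obtain ⟨y, hy, _⟩ := hA x
    exact ⟨y, ((hβ (Nat.pair x y)).2).mpr (by simp [hy])⟩)
  exact ⟨α, hαS, fun x => by simpa using ((hβ (Nat.pair x (α x))).2).mp (hα x)⟩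
end

section
/- Let S be a set of functions ℕ → ℕ. Then S satisfies AC₀₀! if and only if S satisfies both QF-AC₀₀ and CF_d. -/
/-- Semantic form of Corollary 3.3: AC₀₀! is equivalent to QF-AC₀₀ + CF_d. -/
theorem ac00Unique_iff_qfac00_and_cfd (S : Set (ℕ → ℕ)) :
    SatAC00Unique S ↔ SatQFAC00 S ∧ SatCFd S := by

  constructor
  · intro hAC
    constructor
    · intro β hβ hex
      have h : ∀ x, ∃! y, β (Nat.pair x y) = 0 ∧ ∀ z < y, β (Nat.pair x z) ≠ 0 := by
        intro x
        classical
        have : ∃ y, β (Nat.pair x y) = 0 := hex x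
        refine ⟨Nat.find this, ⟨Nat.find_spec this, fun z hz => Nat.find_min this hz⟩, ?_⟩
        rintro y ⟨hy, hmin⟩
        rcases lt_trichotomy y (Nat.find this) with h | h | h
        · exact absurd hy (Nat.find_min this h)
        · exact h
        · exact absurd (Nat.find_spec this) (hmin _ h)
      obtain ⟨α, hα, hα2⟩ := hAC _ h
      exact ⟨α, hα, fun x => (hα2 x).1⟩
    · intro B hB
      have h : ∀ x, ∃! y, (B x ∧ y = 0) ∨ (¬ B x ∧ y = 1) := by
        intro x
        rcases hB x with h | h
        · exact ⟨0, Or.inl ⟨h, rfl⟩, by rintro y (⟨_, rfl⟩ | ⟨hn, _⟩) <;> tauto⟩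
        · exact ⟨1, Or.inr ⟨h, rfl⟩, by rintro y (⟨hb, _⟩ | ⟨_, rfl⟩) <;> tauto⟩
      obtain ⟨β, hβ, hβ2⟩ := hAC _ h
      refine ⟨β, hβ, fun x => ?_⟩
      rcases hβ2 x with ⟨hb, h0⟩ | ⟨hb, h1⟩
      · simp [h0, hb]
      · simp [h1, hb]
  · rintro ⟨hQF, hCF⟩ A hA
    obtain ⟨β, hβ, hβ2⟩ := hCF (fun n => A n.unpair.1 n.unpair.2)
      (fun n => Classical.em _)
    have hex : ∀ x, ∃ y, β (Nat.pair x y) = 0 := by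
      intro x
      obtain ⟨y, hy, -⟩ := hA x
      exact ⟨y, ((hβ2 _).2).mpr (by simpa using hy)⟩
    obtain ⟨α, hα, hα2⟩ := hQF β hβ hex
    refine ⟨α, hα, fun x => ?_⟩
    have := ((hβ2 _).2).mp (hα2 x)
    simpa using this
end

section
/- The set of primitive recursive functions ℕ → ℕ does not satisfy QF-AC₀₀: there exists a primitive recursive function β : ℕ → ℕ such that for every x there exists y with β (Nat.pair x y) = 0, yet there is no primitive recursive α : ℕ → ℕ with β (Nat.pair x (α x)) = 0 for all x. (For example, take β with β (Nat.pair x y) = 0 if and only if Nat.ack x x = y, using that the graph of the Ackermann function is primitive recursive while its diagonal is not primitive recursive.) -/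
/-!
Let `f` be computable but not primitive recursive, say `f = fun n => ack n n`, and let `c` be a
code for `f`. The test "`c` halts on input `x` within `k` steps" is primitive recursive in
`pair x k` (via `Nat.Partrec.Code.evaln`), and for every `x` some `k` passes it. A primitive
recursive `α` choosing such a `k` for each `x` would make `f x = (evaln (α x) c x).getD 0`
primitive recursive.
-/

namespace Nat.Partrec.Code

def haltsWithinTest (c : Code) (z : ℕ) : ℕ :=
  if (evaln z.unpair.2 c z.unpair.1).isSome then 0 else 1

theorem primrec_haltsWithinTest (c : Code) : Primrec (haltsWithinTest c) := by
  have hevaln : Primrec fun z : ℕ => evaln z.unpair.2 c z.unpair.1 :=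
    primrec_evaln.comp <| .pair (.pair (Primrec.snd.comp .unpair) (.const c))
      (Primrec.fst.comp .unpair)
  exact .ite (Primrec.eq.comp (Primrec.option_isSome.comp hevaln) (.const true))
    (.const 0) (.const 1)

theorem haltsWithinTest_pair_eq_zero_iff (c : Code) (x k : ℕ) :
    haltsWithinTest c (Nat.pair x k) = 0 ↔ (evaln k c x).isSome := by
  simp [haltsWithinTest, Option.ne_none_iff_isSome]

theorem exists_haltsWithinTest_pair_eq_zero {c : Code} {x : ℕ} (h : (eval c x).Dom) :
    ∃ k, haltsWithinTest c (Nat.pair x k) = 0 := by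
  obtain ⟨k, hk⟩ := evaln_complete.1 (Part.get_mem h)
  exact ⟨k, (haltsWithinTest_pair_eq_zero_iff c x k).2 (Option.isSome_iff_exists.2 ⟨_, hk⟩)⟩

theorem primrec_of_haltsWithinTest_bound {c : Code} {f α : ℕ → ℕ}
    (hc : eval c = fun n => Part.some (f n)) (hα : Primrec α)
    (hbound : ∀ x, haltsWithinTest c (Nat.pair x (α x)) = 0) : Primrec f := by
  have hrun : Primrec fun x => (evaln (α x) c x).getD 0 :=
    Primrec.option_getD.comp (primrec_evaln.comp (.pair (.pair hα (.const c)) .id)) (.const 0)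
  refine hrun.of_eq fun x => ?_
  obtain ⟨v, hv⟩ := Option.isSome_iff_exists.1
    ((haltsWithinTest_pair_eq_zero_iff c x (α x)).1 (hbound x))
  have hfv : v = f x := Part.mem_some_iff.1 (by simpa [hc] using evaln_sound hv)
  rw [hv, hfv, Option.getD_some]

end Nat.Partrec.Code

open Nat.Partrec.Code in
theorem exists_qfac00_counterexample_of_computable_not_primrec {f : ℕ → ℕ}
    (hf : Computable f) (hnf : ¬ Primrec f) :
    ∃ β : ℕ → ℕ, Primrec β ∧ (∀ x, ∃ y, β (Nat.pair x y) = 0) ∧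
      ¬ ∃ α : ℕ → ℕ, Primrec α ∧ ∀ x, β (Nat.pair x (α x)) = 0 := by
  obtain ⟨c, hc⟩ := exists_code.1 (Partrec.nat_iff.1 hf)
  refine ⟨haltsWithinTest c, primrec_haltsWithinTest c, fun x => ?_, ?_⟩
  · exact exists_haltsWithinTest_pair_eq_zero (by simp [hc])
  · rintro ⟨α, hα, hbound⟩
    exact hnf (primrec_of_haltsWithinTest_bound hc hα hbound)

/-- The primitive recursive functions do not satisfy QF-AC₀₀
(semantic content of Theorem 3.6 of the paper). -/
theorem primrec_not_satisfies_qfac00 :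
    ∃ β : ℕ → ℕ, Primrec β ∧ (∀ x, ∃ y, β (Nat.pair x y) = 0) ∧
      ¬ ∃ α : ℕ → ℕ, Primrec α ∧ ∀ x, β (Nat.pair x (α x)) = 0 :=
  exists_qfac00_counterexample_of_computable_not_primrec
    (computable₂_ack.comp .id .id) not_primrec_ack_self
end

section
/- Let S be a set of functions ℕ → ℕ. If S satisfies the axiom of unbounded search and S satisfies CF_d, then S satisfies AC₀₀!. -/
/-- `S` satisfies the axiom of unbounded search of Veldman's BIM. -/
def SatUnboundedSearch (S : Set (ℕ → ℕ)) : Prop :=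
  ∀ α ∈ S, (∀ m, ∃ n, α (Nat.pair m n) = 0) →
    ∃ γ ∈ S, ∀ m, α (Nat.pair m (γ m)) = 0 ∧ ∀ n < γ m, α (Nat.pair m n) ≠ 0

/-- Semantic form of Proposition 7.1: over BIM (with unbounded search),
CF_d entails AC₀₀!. -/
theorem unboundedSearch_and_cfd_implies_ac00Unique (S : Set (ℕ → ℕ))
    (hUS : SatUnboundedSearch S) (hCF : SatCFd S) : SatAC00Unique S := by
  intro A hA
  obtain ⟨β, hβS, hβ⟩ := hCF (fun p => A p.unpair.1 p.unpair.2)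
    (fun p => Classical.em _)
  obtain ⟨γ, hγS, hγ⟩ := hUS β hβS (fun m => by
    obtain ⟨y, hy, -⟩ := hA m
    exact ⟨y, ((hβ _).2).mpr (by simp [hy])⟩)
  refine ⟨γ, hγS, fun m => ?_⟩
  have := ((hβ _).2).mp (hγ m).1
  simpa using this
end

section
/- Let S be a set of functions ℕ → ℕ. Then S satisfies AC₀₀! if and only if S satisfies both the axiom of unbounded search and CF_d. (In particular, AC₀₀! entails unbounded search: for α ∈ S with ∀ m ∃ n, α (Nat.pair m n) = 0, the relation assigning to m its least zero-witness n has a unique witness for each m.) -/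
/-- Semantic form of the remark after Proposition 7.1: AC₀₀! is equivalent
to the conjunction of unbounded search and CF_d. -/
theorem ac00Unique_iff_unboundedSearch_and_cfd (S : Set (ℕ → ℕ)) :
    SatAC00Unique S ↔ SatUnboundedSearch S ∧ SatCFd S := by
  constructor
  · intro hAC
    constructor
    · intro α hα hz
      have huniq : ∀ m, ∃! n, α (Nat.pair m n) = 0 ∧ ∀ k < n, α (Nat.pair m k) ≠ 0 := by
        intro m
        obtain ⟨n, hn⟩ := hz m
        refine ⟨Nat.find (hz m), ⟨Nat.find_spec (hz m), fun k hk => Nat.find_min (hz m) hk⟩, ?_⟩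
        rintro y ⟨hy, hmin⟩
        rcases lt_trichotomy y (Nat.find (hz m)) with h | h | h
        · exact absurd hy (Nat.find_min (hz m) h)
        · exact h
        · exact absurd (Nat.find_spec (hz m)) (hmin _ h)
      obtain ⟨γ, hγS, hγ⟩ := hAC (fun m n => α (Nat.pair m n) = 0 ∧ ∀ k < n, α (Nat.pair m k) ≠ 0) huniq
      exact ⟨γ, hγS, fun m => hγ m⟩
    · intro B hB
      have huniq : ∀ x, ∃! y, (B x ∧ y = 0) ∨ (¬ B x ∧ y = 1) := by
        intro x
        rcases hB x with h | h
        · exact ⟨0, Or.inl ⟨h, rfl⟩, by rintro y (⟨_, rfl⟩ | ⟨hn, _⟩) <;> [rfl; exact absurd h hn]⟩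
        · exact ⟨1, Or.inr ⟨h, rfl⟩, by rintro y (⟨hb, _⟩ | ⟨_, rfl⟩) <;> [exact absurd hb h; rfl]⟩
      obtain ⟨β, hβS, hβ⟩ := hAC _ huniq
      refine ⟨β, hβS, fun x => ?_⟩
      rcases hβ x with ⟨hb, h0⟩ | ⟨hb, h1⟩
      · exact ⟨by omega, by simp [h0, hb]⟩
      · exact ⟨by omega, by simp [h1, hb]⟩
  · rintro ⟨hUS, hCF⟩ A hA
    obtain ⟨β, hβS, hβ⟩ := hCF (fun x => A x.unpair.1 x.unpair.2) (fun x => Classical.em _)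
    have hz : ∀ m, ∃ n, β (Nat.pair m n) = 0 := by
      intro m
      obtain ⟨y, hy, -⟩ := hA m
      exact ⟨y, by rw [(hβ (Nat.pair m y)).2]; simpa using hy⟩
    obtain ⟨γ, hγS, hγ⟩ := hUS β hβS hz
    refine ⟨γ, hγS, fun m => ?_⟩
    have := (hβ (Nat.pair m (γ m))).2.mp (hγ m).1
    simpa using this
end
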